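/- Let (m_k)_{1≤k≤n} be positive integers with m_{k+1}/m_k ≥ 2 for all k, and let a_1, …, a_n be real numbers. Then for every complex number z, ∫_0^1 exp(z Σ_{k=1}^n a_k W_{m_k}(x)) dx = Π_{k=1}^n cosh(z a_k). -/

import Mathlib

/-! Each `W_m` takes the values `±1`, so `exp (c W_m) = cosh c + sinh c W_m`, and the integrand
expands into a sum over subsets `t` of
`∏_{k ∈ t} sinh (z a_k) ∏_{k ∉ t} cosh (z a_k) ∏_{k ∈ t} W_{m_k}`.
Since `W_p W_q = W_{p xor q}` and the gap condition makes the leading binary digits of the `m_k`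
distinct, the product over a nonempty `t` is a single `W_M` with `M ≠ 0`. If `L` is the leading
digit of `M`, then `W_M = W_{M xor 2^L} r_L`, where `W_{M xor 2^L}` is constant on the dyadic
intervals of length `2^{-L}` and `r_L` has integral zero on each of them. Hence only `t = ∅`
contributes, giving `∏_k cosh (z a_k)`. -/

open MeasureTheory

/-- The base Rademacher function: `1` on `[0, 1/2)`, `-1` on `[1/2, 1)`, extended 1-periodically. -/
noncomputable def r0 (x : ℝ) : ℝ := if Int.fract x < 1 / 2 then 1 else -1

/-- The `n`-th Rademacher function `r_n(x) = r_0(2^n x)`. -/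
noncomputable def rademacher (n : ℕ) (x : ℝ) : ℝ := r0 (2 ^ n * x)

/-- The `n`-th Walsh function `W_n(x) = ∏_i r_i(x)^{k_i}` where `n = ∑ k_i 2^i`. -/
noncomputable def walsh (n : ℕ) (x : ℝ) : ℝ :=
  ∏ i ∈ Finset.range (n + 1), if n.testBit i then rademacher i x else 1

theorem IntervalIntegrable.ofReal {f : ℝ → ℝ} {a b : ℝ} {μ : Measure ℝ}
    (hf : IntervalIntegrable f μ a b) : IntervalIntegrable (fun x => (f x : ℂ)) μ a b :=
  ⟨hf.1.ofReal, hf.2.ofReal⟩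

theorem two_mul_le_of_two_mul_le_succ {f : ℕ → ℕ} {a b : ℕ}
    (h : ∀ k, a ≤ k → k + 1 ≤ b → 2 * f k ≤ f (k + 1)) {k l : ℕ} (hk : a ≤ k) (hkl : k < l)
    (hl : l ≤ b) : 2 * f k ≤ f l := by
  induction l, hkl using Nat.le_induction with
  | base => exact h k hk hl
  | succ l hkl ih =>
    have := h l (by omega) hl
    have := ih (by omega)
    omega

theorem Complex.exp_mul_eq_cosh_add_sinh_mul (c : ℂ) {w : ℝ} (hw : w = 1 ∨ w = -1) :
    exp (c * w) = cosh c + sinh c * w := by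
  rcases hw with rfl | rfl
  · simp [cosh_add_sinh]
  · simp [cosh_sub_sinh, ← sub_eq_add_neg]

theorem Complex.exp_sum_mul_eq_sum_powerset {ι : Type*} [DecidableEq ι] (s : Finset ι)
    (c : ι → ℂ) (w : ι → ℝ) (hw : ∀ k ∈ s, w k = 1 ∨ w k = -1) :
    exp (∑ k ∈ s, c k * w k) =
      ∑ t ∈ s.powerset,
        (∏ k ∈ t, sinh (c k)) * (∏ k ∈ s \ t, cosh (c k)) * (∏ k ∈ t, w k : ℝ) := by
  rw [exp_sum, Finset.prod_congr rfl fun k hk => exp_mul_eq_cosh_add_sinh_mul (c k) (hw k hk)]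
  simp_rw [add_comm (cosh _), Finset.prod_add, Finset.prod_mul_distrib, ofReal_prod]
  exact Finset.sum_congr rfl fun t _ => by ring

theorem r0_eq_ite (x : ℝ) : r0 x = if Even ⌊2 * x⌋ then 1 else -1 := by
  have hfloor : ⌊2 * x⌋ = ⌊2 * Int.fract x⌋ + 2 * ⌊x⌋ := by
    rw [← Int.floor_add_intCast, Int.fract]
    push_cast
    ring_nf
  have hfract_nonneg := Int.fract_nonneg x
  have hfract_lt_one := Int.fract_lt_one x
  unfold r0
  split_ifs with hx heven heven
  · rfl
  · rw [hfloor, Int.floor_eq_zero_iff.2 ⟨by positivity, by linarith⟩, zero_add] at heven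
    exact absurd (even_two_mul _) heven
  · rw [hfloor, (Int.floor_eq_iff (z := 1)).2 ⟨by push_cast; linarith, by push_cast; linarith⟩,
      add_comm] at heven
    exact absurd heven (Int.not_even_two_mul_add_one _)
  · rfl

theorem r0_periodic : Function.Periodic r0 1 := by
  intro x
  simp [r0]

theorem r0_eq_one_or_neg_one (x : ℝ) : r0 x = 1 ∨ r0 x = -1 := by
  unfold r0
  split_ifs <;> simp

theorem measurable_r0 : Measurable r0 :=
  Measurable.ite (measurableSet_lt measurable_fract measurable_const) measurable_const
    measurable_const

theorem intervalIntegrable_r0 (a b : ℝ) : IntervalIntegrable r0 volume a b :=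
  (intervalIntegrable_const (c := (1 : ℝ))).mono_fun' measurable_r0.aestronglyMeasurable
    (Filter.Eventually.of_forall fun x => by
      rcases r0_eq_one_or_neg_one x with h | h <;> simp [h])

theorem integral_r0 : ∫ x in (0 : ℝ)..1, r0 x = 0 := by
  have hleft : ∫ x in (0 : ℝ)..1 / 2, r0 x = ∫ x in (0 : ℝ)..1 / 2, (1 : ℝ) :=
    intervalIntegral.integral_congr_Ioo_of_le (by norm_num) fun x hx => by
      rw [r0, Int.fract_eq_self.2 ⟨hx.1.le, by linarith [hx.2]⟩, if_pos hx.2]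
  have hright : ∫ x in (1 / 2 : ℝ)..1, r0 x = ∫ x in (1 / 2 : ℝ)..1, (-1 : ℝ) :=
    intervalIntegral.integral_congr_Ioo_of_le (by norm_num) fun x hx => by
      rw [r0, Int.fract_eq_self.2 ⟨by linarith [hx.1], hx.2⟩, if_neg (not_lt.2 hx.1.le)]
  rw [← intervalIntegral.integral_add_adjacent_intervals (b := 1 / 2) (intervalIntegrable_r0 _ _)
    (intervalIntegrable_r0 _ _), hleft, hright]
  norm_num

theorem rademacher_eq_of_floor_eq {i J : ℕ} (hi : i < J) {x y : ℝ}
    (h : ⌊(2 : ℝ) ^ J * x⌋ = ⌊(2 : ℝ) ^ J * y⌋) : rademacher i x = rademacher i y := by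
  obtain ⟨d, rfl⟩ : ∃ d, J = i + 1 + d := ⟨J - (i + 1), by omega⟩
  have hfloor (u : ℝ) : ⌊2 * (2 ^ i * u)⌋ = ⌊(2 : ℝ) ^ (i + 1 + d) * u⌋ / ((2 ^ d : ℕ) : ℤ) := by
    rw [← Int.floor_div_natCast]
    congr 1
    push_cast
    field_simp
    ring
  simp only [rademacher, r0_eq_ite, hfloor, h]

theorem integral_rademacher_dyadic (J j : ℕ) :
    ∫ x in (j / 2 ^ J : ℝ)..(j + 1) / 2 ^ J, rademacher J x = 0 := by
  have h2J : (2 : ℝ) ^ J ≠ 0 := by positivity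
  simp only [rademacher]
  rw [intervalIntegral.integral_comp_mul_left _ h2J, mul_div_cancel₀ _ h2J,
    mul_div_cancel₀ _ h2J, r0_periodic.intervalIntegral_add_eq, zero_add, integral_r0, smul_zero]

theorem walsh_eq_prod_range {p N : ℕ} (h : p < N) (x : ℝ) :
    walsh p x = ∏ i ∈ Finset.range N, if p.testBit i then rademacher i x else 1 := by
  refine Finset.prod_subset (Finset.range_subset_range.2 h) fun i _ hi => ?_
  have hpi : p < 2 ^ i :=
    (not_le.1 (Finset.mem_range_succ_iff.not.1 hi)).trans i.lt_two_pow_self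
  simp [Nat.testBit_lt_two_pow hpi]

theorem walsh_mul (p q : ℕ) (x : ℝ) : walsh p x * walsh q x = walsh (p ^^^ q) x := by
  have hN (r : ℕ) (hr : r ≤ p + q + (p ^^^ q)) :=
    walsh_eq_prod_range (N := p + q + (p ^^^ q) + 1) (Nat.lt_succ_of_le hr) x
  rw [hN p (by omega), hN q (by omega), hN (p ^^^ q) (by omega), ← Finset.prod_mul_distrib]
  refine Finset.prod_congr rfl fun i _ => ?_
  have hsq : rademacher i x * rademacher i x = 1 := by
    rcases r0_eq_one_or_neg_one (2 ^ i * x) with h | h <;> simp [rademacher, h]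
  rw [Nat.testBit_xor]
  cases p.testBit i <;> cases q.testBit i <;> simp [hsq]

theorem walsh_two_pow (J : ℕ) (x : ℝ) : walsh (2 ^ J) x = rademacher J x := by
  rw [walsh, Finset.prod_eq_single_of_mem J (Finset.mem_range_succ_iff.2 J.lt_two_pow_self.le)]
  · simp [Nat.testBit_two_pow_self]
  · intro i _ hiJ
    simp [Nat.testBit_two_pow_of_ne hiJ.symm]

theorem walsh_eq_one_or_neg_one (p : ℕ) (x : ℝ) : walsh p x = 1 ∨ walsh p x = -1 := by
  refine Finset.prod_induction _ (fun r => r = 1 ∨ r = -1) ?_ (Or.inl rfl) fun i _ => ?_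
  · rintro _ _ (rfl | rfl) (rfl | rfl) <;> norm_num
  · split_ifs
    exacts [r0_eq_one_or_neg_one _, Or.inl rfl]

theorem measurable_walsh (p : ℕ) : Measurable (walsh p) :=
  Finset.measurable_prod _ fun i _ => by
    split_ifs
    exacts [measurable_r0.comp (measurable_const_mul _), measurable_const]

theorem walsh_eq_of_floor_eq {p J : ℕ} (hp : p < 2 ^ J) {x y : ℝ}
    (h : ⌊(2 : ℝ) ^ J * x⌋ = ⌊(2 : ℝ) ^ J * y⌋) : walsh p x = walsh p y := by
  refine Finset.prod_congr rfl fun i _ => ?_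
  split_ifs with hbit
  · refine rademacher_eq_of_floor_eq ?_ h
    by_contra! hJi
    exact (Nat.ge_two_pow_of_testBit hbit).not_gt (hp.trans_le (Nat.pow_le_pow_right two_pos hJi))
  · rfl

theorem intervalIntegrable_prod_walsh {ι : Type*} (s : Finset ι) (m : ι → ℕ) (a b : ℝ) :
    IntervalIntegrable (fun x => ∏ k ∈ s, walsh (m k) x) volume a b :=
  (intervalIntegrable_const (c := (1 : ℝ))).mono_fun'
    (Finset.measurable_prod _ fun k _ => measurable_walsh (m k)).aestronglyMeasurable
    (Filter.Eventually.of_forall fun x => by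
      simp only [norm_prod]
      refine (Finset.prod_eq_one fun k _ => ?_).le
      rcases walsh_eq_one_or_neg_one (m k) x with h | h <;> simp [h])

theorem integral_mul_rademacher_eq_zero {g : ℝ → ℝ} {J : ℕ}
    (hg : ∀ x y, ⌊(2 : ℝ) ^ J * x⌋ = ⌊(2 : ℝ) ^ J * y⌋ → g x = g y)
    (hint : IntervalIntegrable (fun x => g x * rademacher J x) volume 0 1) :
    ∫ x in (0 : ℝ)..1, g x * rademacher J x = 0 := by
  have h2J : (0 : ℝ) < 2 ^ J := by positivity
  have hpiece (j : ℕ) : ∫ x in (j / 2 ^ J : ℝ)..(j + 1) / 2 ^ J, g x * rademacher J x = 0 := by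
    have hconst : Set.EqOn (fun x => g x * rademacher J x)
        (fun x => g (j / 2 ^ J) * rademacher J x) (Set.Ioo (j / 2 ^ J) ((j + 1) / 2 ^ J)) := by
      intro x hx
      have hfloor : ⌊(2 : ℝ) ^ J * x⌋ = j := by
        rw [Int.floor_eq_iff]
        rw [Set.mem_Ioo, div_lt_iff₀' h2J, lt_div_iff₀' h2J] at hx
        push_cast
        constructor <;> linarith
      simp only
      rw [hg x (j / 2 ^ J) (by rw [hfloor, mul_div_cancel₀ _ h2J.ne', Int.floor_natCast])]
    rw [intervalIntegral.integral_congr_Ioo_of_le (by gcongr; linarith) hconst,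
      intervalIntegral.integral_const_mul, integral_rademacher_dyadic, mul_zero]
  have hsum := intervalIntegral.sum_integral_adjacent_intervals (μ := volume)
    (a := fun j : ℕ => (j / 2 ^ J : ℝ)) (n := 2 ^ J) fun j hj => hint.mono_set (by
      rw [Set.uIcc_of_le (by gcongr; linarith), Set.uIcc_of_le zero_le_one]
      refine Set.Icc_subset_Icc (by positivity) ((div_le_one h2J).2 ?_)
      exact_mod_cast hj)
  push_cast at hsum
  simpa [hpiece, h2J.ne'] using hsum.symm

theorem integral_walsh_eq_zero {M : ℕ} (hM : M ≠ 0) : ∫ x in (0 : ℝ)..1, walsh M x = 0 := by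
  set L := M.log2
  have hlow : M ^^^ 2 ^ L < 2 ^ L := by
    refine Nat.lt_pow_two_of_testBit _ fun i hi => ?_
    rcases hi.eq_or_lt with rfl | hlt
    · rw [Nat.testBit_xor, Nat.testBit_log2 hM, Nat.testBit_two_pow_self]
      rfl
    · rw [Nat.testBit_xor, Nat.testBit_two_pow_of_ne hlt.ne,
        Nat.testBit_lt_two_pow (Nat.lt_log2_self.trans_le (Nat.pow_le_pow_right two_pos hlt))]
      rfl
  have hsplit (x : ℝ) : walsh M x = walsh (M ^^^ 2 ^ L) x * rademacher L x := by
    rw [← walsh_two_pow, walsh_mul, Nat.xor_assoc, Nat.xor_self, Nat.xor_zero]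
  simp only [hsplit]
  refine integral_mul_rademacher_eq_zero (fun x y h => walsh_eq_of_floor_eq hlow h) ?_
  simpa only [← hsplit, Finset.prod_singleton] using
    intervalIntegrable_prod_walsh {()} (fun _ => M) 0 1

theorem exists_walsh_eq_prod_of_two_mul_le {ι : Type*} [LinearOrder ι] (m : ι → ℕ)
    (s : Finset ι) (hm : ∀ k ∈ s, m k ≠ 0) (hgap : ∀ k ∈ s, ∀ l ∈ s, k < l → 2 * m k ≤ m l) :
    ∃ M, (s.Nonempty → M ≠ 0) ∧ (∀ j, (∀ k ∈ s, m k < 2 ^ j) → M < 2 ^ j) ∧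
      ∀ x, ∏ k ∈ s, walsh (m k) x = walsh M x := by
  classical
  induction s using Finset.induction_on_max with
  | empty => exact ⟨0, by simp, fun _ _ => by positivity, fun x => by simp [walsh]⟩
  | insert a s hlt ih =>
    obtain ⟨M, -, hMlt, hprod⟩ := ih (fun k hk => hm k (Finset.mem_insert_of_mem hk))
      fun k hk l hl => hgap k (Finset.mem_insert_of_mem hk) l (Finset.mem_insert_of_mem hl)
    have ha := hm a (Finset.mem_insert_self a s)
    -- the gap condition puts all of `M` below the leading digit of `m a`, which thus survives
    have hML : M < 2 ^ (m a).log2 := hMlt _ fun k hk => by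
      have hka := hgap k (Finset.mem_insert_of_mem hk) a (Finset.mem_insert_self a s) (hlt k hk)
      have hmaL : m a < 2 ^ (m a).log2 * 2 := pow_succ 2 (m a).log2 ▸ Nat.lt_log2_self
      omega
    refine ⟨m a ^^^ M, fun _ hzero => ?_, fun j hj => ?_, fun x => ?_⟩
    · have hbit := congrArg (Nat.testBit · (m a).log2) hzero
      simp [Nat.testBit_xor, Nat.testBit_log2 ha, Nat.testBit_lt_two_pow hML] at hbit
    · exact Nat.xor_lt_two_pow (hj a (Finset.mem_insert_self a s))
        (hMlt j fun k hk => hj k (Finset.mem_insert_of_mem hk))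
    · rw [Finset.prod_insert fun h => (hlt a h).false, hprod, walsh_mul]

theorem integral_prod_walsh_eq_zero_of_two_mul_le {ι : Type*} [LinearOrder ι] (m : ι → ℕ)
    {s : Finset ι} (hs : s.Nonempty) (hm : ∀ k ∈ s, m k ≠ 0)
    (hgap : ∀ k ∈ s, ∀ l ∈ s, k < l → 2 * m k ≤ m l) :
    ∫ x in (0 : ℝ)..1, ∏ k ∈ s, walsh (m k) x = 0 := by
  obtain ⟨M, hM, -, hprod⟩ := exists_walsh_eq_prod_of_two_mul_le m s hm hgap
  simp only [hprod]
  exact integral_walsh_eq_zero (hM hs)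

/-- For positive integers `m 1, …, m n` with `m (k+1) / m k ≥ 2` and real
coefficients `a 1, …, a n`, for every complex `z`,
`∫_0^1 exp (z ∑_{k=1}^n a k · W_{m k}(x)) dx = ∏_{k=1}^n cosh (z · a k)`. -/
theorem mgf_walsh_sum (n : ℕ) (m : ℕ → ℕ) (a : ℕ → ℝ)
    (hpos : ∀ k, 1 ≤ k → k ≤ n → 0 < m k)
    (hlac : ∀ k, 1 ≤ k → k + 1 ≤ n → (m (k + 1) : ℝ) / (m k : ℝ) ≥ 2)
    (z : ℂ) :
    ∫ x in (0 : ℝ)..1,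
        Complex.exp (z * ∑ k ∈ Finset.Icc 1 n, (a k : ℂ) * (walsh (m k) x : ℂ)) =
      ∏ k ∈ Finset.Icc 1 n, Complex.cosh (z * (a k : ℂ)) := by
  classical
  have hgap : ∀ k ∈ Finset.Icc 1 n, ∀ l ∈ Finset.Icc 1 n, k < l → 2 * m k ≤ m l := by
    refine fun k hk l hl hkl => two_mul_le_of_two_mul_le_succ (fun j hj hjn => ?_)
      (Finset.mem_Icc.1 hk).1 hkl (Finset.mem_Icc.1 hl).2
    have hratio := hlac j hj hjn
    rw [ge_iff_le, le_div_iff₀ (by exact_mod_cast hpos j hj (by omega))] at hratio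
    exact_mod_cast hratio
  have hm : ∀ k ∈ Finset.Icc 1 n, m k ≠ 0 := fun k hk =>
    (hpos k (Finset.mem_Icc.1 hk).1 (Finset.mem_Icc.1 hk).2).ne'
  simp_rw [Finset.mul_sum, ← mul_assoc]
  simp_rw [Complex.exp_sum_mul_eq_sum_powerset _ _ _ fun k _ => walsh_eq_one_or_neg_one (m k) _]
  rw [intervalIntegral.integral_finsetSum fun t _ =>
    (intervalIntegrable_prod_walsh t m 0 1).ofReal.const_mul _]
  rw [Finset.sum_eq_single_of_mem ∅ (Finset.empty_mem_powerset _) fun t ht htne => ?_]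
  · simp [mul_comm z]
  · have hsub := Finset.mem_powerset.1 ht
    rw [intervalIntegral.integral_const_mul, intervalIntegral.integral_ofReal,
      integral_prod_walsh_eq_zero_of_two_mul_le m (Finset.nonempty_iff_ne_empty.2 htne)
        (fun k hk => hm k (hsub hk)) (fun k hk l hl => hgap k (hsub hk) l (hsub hl)),
      Complex.ofReal_zero, mul_zero]
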